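/- Let C be a category with objects r, s, x, x' and morphisms g : x ⟶ r, f : x ⟶ s, g' : x' ⟶ r, f' : x' ⟶ s, such that (g, f) is jointly monic (for all a, b : z ⟶ x, a ≫ g = b ≫ g and a ≫ f = b ≫ f imply a = b) and (g', f') is jointly monic. Suppose π : P ⟶ x, π' : P ⟶ x' form a pullback of f and f' (IsPullback π π' f f'), and ρ : Q ⟶ x, ρ' : Q ⟶ x' form a pullback of g and g' (IsPullback ρ ρ' g g'). Suppose given i : r ⟶ P with i ≫ π ≫ g = 𝟙 r and i ≫ π' ≫ g' = 𝟙 r, and suppose ρ ≫ f = ρ' ≫ f'. Then g and g' are isomorphisms, with inverses i ≫ π and i ≫ π' respectively, and f' = g' ≫ (i ≫ π) ≫ f. -/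

import Mathlib

/-!
Put `e := i ≫ π` and `e' := i ≫ π'`, sections of `g` and `g'` with `e ≫ f = e' ≫ f'`.
The counit says that every cone `(a, b)` over `(g, g')` satisfies `a ≫ f = b ≫ f'`, since it
factors through the pullback `Q`. Applied to the cones `(𝟙, g ≫ e')` and `(g' ≫ e, 𝟙)` this gives
`g ≫ e ≫ f = f` and `g' ≫ e ≫ f = f'`, and joint monicity turns these into `g ≫ e = 𝟙` and
`g' ≫ e' = 𝟙`.
-/

open CategoryTheory

namespace CategoryTheory

variable {C : Type*} [Category C]

lemma JointlyMono₂.eq_id {x r s : C} {g : x ⟶ r} {f : x ⟶ s} [JointlyMono₂ g f]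
    {a : x ⟶ x} (hg : a ≫ g = g) (hf : a ≫ f = f) : a = 𝟙 x :=
  JointlyMono₂.right_cancellation _ _ (by simpa using hg) (by simpa using hf)

lemma IsPullback.comp_eq_comp_of_comp_eq {x x' r s Q : C} {ρ : Q ⟶ x} {ρ' : Q ⟶ x'}
    {g : x ⟶ r} {g' : x' ⟶ r} (hQ : IsPullback ρ ρ' g g') {f : x ⟶ s} {f' : x' ⟶ s}
    (h : ρ ≫ f = ρ' ≫ f') {z : C} {a : z ⟶ x} {b : z ⟶ x'} (hab : a ≫ g = b ≫ g') :
    a ≫ f = b ≫ f' := by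
  simpa using hQ.lift a b hab ≫= h

end CategoryTheory

theorem jointly_monic_adjunction_graph {C : Type*} [Category C]
    {r s x x' P Q : C}
    (g : x ⟶ r) (f : x ⟶ s) (g' : x' ⟶ r) (f' : x' ⟶ s)
    (hjm : ∀ {z : C} (a b : z ⟶ x), a ≫ g = b ≫ g → a ≫ f = b ≫ f → a = b)
    (hjm' : ∀ {z : C} (a b : z ⟶ x'), a ≫ g' = b ≫ g' → a ≫ f' = b ≫ f' → a = b)
    (π : P ⟶ x) (π' : P ⟶ x') (hP : IsPullback π π' f f')
    (ρ : Q ⟶ x) (ρ' : Q ⟶ x') (hQ : IsPullback ρ ρ' g g')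
    (i : r ⟶ P) (hi : i ≫ π ≫ g = 𝟙 r) (hi' : i ≫ π' ≫ g' = 𝟙 r)
    (hcounit : ρ ≫ f = ρ' ≫ f') :
    (g ≫ (i ≫ π) = 𝟙 x ∧ (i ≫ π) ≫ g = 𝟙 r) ∧
      (g' ≫ (i ≫ π') = 𝟙 x' ∧ (i ≫ π') ≫ g' = 𝟙 r) ∧
      f' = g' ≫ (i ≫ π) ≫ f := by
  have : JointlyMono₂ g f := ⟨fun _ => hjm⟩
  have : JointlyMono₂ g' f' := ⟨fun _ => hjm'⟩
  set e := i ≫ π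
  set e' := i ≫ π'
  have he : e ≫ g = 𝟙 r := by simpa [e] using hi
  have he' : e' ≫ g' = 𝟙 r := by simpa [e'] using hi'
  have hef : e ≫ f = e' ≫ f' := by simp only [e, e', Category.assoc, hP.w]
  have hf : f = g ≫ e' ≫ f' := by
    simpa using hQ.comp_eq_comp_of_comp_eq hcounit (a := 𝟙 x) (b := g ≫ e') (by simp [he'])
  have hf' : g' ≫ e ≫ f = f' := by
    simpa using hQ.comp_eq_comp_of_comp_eq hcounit (a := g' ≫ e) (b := 𝟙 x') (by simp [he])
  have hge : g ≫ e = 𝟙 x :=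
    JointlyMono₂.eq_id (g := g) (f := f) (by simp [he]) (by rw [Category.assoc, hef, hf])
  have hge' : g' ≫ e' = 𝟙 x' :=
    JointlyMono₂.eq_id (g := g') (f := f') (by simp [he']) (by rw [Category.assoc, ← hef, hf'])
  exact ⟨⟨hge, he⟩, ⟨hge', he'⟩, hf'.symm⟩
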